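/- arXiv:1208.2765 — 3 statements merged into one kernel-verified Lean document; each statement's English description precedes it below -/
import Mathlib

section
/- Let C = (R, N, Q, δ) and G = (R, N, Q, γ) be synchronous cellular automata whose (synchronous) global transition functions Δ_R and Γ_R are mutually inverse bijections of Q^R. Define C̄ and Ḡ via Nakamura's construction with state set Q̄ = Q × Q × {0,1,2} (current state, old state, time stamp mod 3), where an active cell of C̄ updates to (δ(curr(ℓ̄)), curr(ℓ̄_0), time(ℓ̄_0)+1) exactly when its local configuration is forward movable (cell 0 not ahead of any neighbor mod 3, and old(ℓ̄_0) = γ(curr(ℓ̄))), and symmetrically for Ḡ with backward movability. Then for all c, c' ∈ Q̄^R with difference D = D_{c,c'}: c' = Δ̄_D(c) implies c = Γ̄_D(c'). Consequently C̄ and Ḡ are purely asynchronous inverses of each other. -/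
noncomputable section
open scoped Classical

/-- The set of cells of a `d`-dimensional cellular automaton: `ℤ^d`. -/
abbrev Cell (d : ℕ) := Fin d → ℤ

/-- The global transition function `Δ_A` with active cell set `A`:
an active cell applies the local rule `δ` to the local configuration it
observes in its neighborhood `N`; a passive cell keeps its state. -/
def step {d : ℕ} {Q : Type*} (N : Finset (Cell d)) (δ : (↥N → Q) → Q)
    (A : Set (Cell d)) (c : Cell d → Q) : Cell d → Q :=
  fun i => if i ∈ A then δ (fun n => c (i + n.1)) else c i

/-- The difference set `D_{c,c'}` of two global configurations. -/
def diffSet {d : ℕ} {Q : Type*} (c c' : Cell d → Q) : Set (Cell d) :=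
  {i | c i ≠ c' i}

/-- Two purely asynchronous CAs are inverse to each other. -/
def PureInverse {d : ℕ} {Q : Type*} (N M : Finset (Cell d))
    (δ : (↥N → Q) → Q) (γ : (↥M → Q) → Q) : Prop :=
  ∀ c c' : Cell d → Q,
    (∃ A : Set (Cell d), c' = step N δ A c) ↔ (∃ A : Set (Cell d), c = step M γ A c')

/-- Two fully asynchronous CAs are inverse to each other. -/
def FullInverse {d : ℕ} {Q : Type*} (N M : Finset (Cell d))
    (δ : (↥N → Q) → Q) (γ : (↥M → Q) → Q) : Prop :=
  ∀ c c' : Cell d → Q,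
    (∃ a : Cell d, c' = step N δ {a} c) ↔ (∃ a : Cell d, c = step M γ {a} c')

/-- States of Nakamura's construction: current state, old state, time stamp mod 3. -/
abbrev QBar (Q : Type*) := Q × Q × ZMod 3

def curr {Q : Type*} (q : QBar Q) : Q := q.1
def old {Q : Type*} (q : QBar Q) : Q := q.2.1
def timeStamp {Q : Type*} (q : QBar Q) : ZMod 3 := q.2.2

variable {d : ℕ} {Q : Type*}

/-- Cell `0` is ahead of some neighbor. -/
def Ahead (N : Finset (Cell d)) (h0 : (0 : Cell d) ∈ N) (ℓ : ↥N → QBar Q) : Prop :=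
  ∃ n : ↥N, timeStamp (ℓ ⟨0, h0⟩) = timeStamp (ℓ n) + 1

/-- The corresponding current local `C`-configuration (meaningful when cell `0`
is not ahead, so that every neighbor has the same time stamp or is one ahead). -/
def currLoc (N : Finset (Cell d)) (h0 : (0 : Cell d) ∈ N) (ℓ : ↥N → QBar Q) : ↥N → Q :=
  fun n => if timeStamp (ℓ n) = timeStamp (ℓ ⟨0, h0⟩) then curr (ℓ n) else old (ℓ n)

/-- Cell `0` is behind some neighbor. -/
def Behind (N : Finset (Cell d)) (h0 : (0 : Cell d) ∈ N) (ℓ : ↥N → QBar Q) : Prop :=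
  ∃ n : ↥N, timeStamp (ℓ ⟨0, h0⟩) = timeStamp (ℓ n) - 1

/-- The corresponding old local `C`-configuration (meaningful when cell `0`
is not behind). -/
def oldLoc (N : Finset (Cell d)) (h0 : (0 : Cell d) ∈ N) (ℓ : ↥N → QBar Q) : ↥N → Q :=
  fun n => if timeStamp (ℓ n) = timeStamp (ℓ ⟨0, h0⟩) then old (ℓ n) else curr (ℓ n)

/-- Local rule of Nakamura's asynchronous simulation `C̄` of `C`: a cell moves
forward exactly when its local configuration is forward movable. -/
def deltaBar (N : Finset (Cell d)) (h0 : (0 : Cell d) ∈ N)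
    (δ γ : (↥N → Q) → Q) (ℓ : ↥N → QBar Q) : QBar Q :=
  if ¬ Ahead N h0 ℓ ∧ old (ℓ ⟨0, h0⟩) = γ (currLoc N h0 ℓ) then
    (δ (currLoc N h0 ℓ), curr (ℓ ⟨0, h0⟩), timeStamp (ℓ ⟨0, h0⟩) + 1)
  else ℓ ⟨0, h0⟩

/-- Local rule of the backward simulation `Ḡ`: a cell moves backward exactly
when its local configuration is backward movable. -/
def gammaBar (N : Finset (Cell d)) (h0 : (0 : Cell d) ∈ N)
    (δ γ : (↥N → Q) → Q) (ℓ : ↥N → QBar Q) : QBar Q :=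
  if ¬ Behind N h0 ℓ ∧ curr (ℓ ⟨0, h0⟩) = δ (oldLoc N h0 ℓ) then
    (old (ℓ ⟨0, h0⟩), γ (oldLoc N h0 ℓ), timeStamp (ℓ ⟨0, h0⟩) - 1)
  else ℓ ⟨0, h0⟩


private lemma zmod3_A : ∀ a b : ZMod 3, ¬ a = b + 1 → b = a ∨ b = a + 1 := by decide
private lemma zmod3_B : ∀ a b : ZMod 3, (b = a ∨ b = a + 1) → ¬ a + 1 = b - 1 := by decide
private lemma zmod3_C : ∀ a : ZMod 3, ¬ a = a + 1 := by decide
private lemma zmod3_D : ∀ a b : ZMod 3, ¬ a = b - 1 → b = a ∨ b = a - 1 := by decide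
private lemma zmod3_E : ∀ a b : ZMod 3, (b = a ∨ b = a - 1) → ¬ a - 1 = b + 1 := by decide
private lemma zmod3_F : ∀ a : ZMod 3, ¬ a = a - 1 := by decide
private lemma zmod3_G : ∀ a : ZMod 3, a + 1 - 1 = a := by decide
private lemma zmod3_H : ∀ a : ZMod 3, a - 1 + 1 = a := by decide

/-- If `c' = step f A c` for some `A`, then also `c' = step f D c` with `D` the
difference set. -/
lemma step_diffSet {Q' : Type*} {N : Finset (Cell d)} {f : (↥N → Q') → Q'}
    {A : Set (Cell d)} {c c' : Cell d → Q'} (h : c' = step N f A c) :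
    c' = step N f (diffSet c c') c := by
  funext i
  simp only [step]
  by_cases hi : i ∈ diffSet c c'
  · simp only [hi, if_true]
    have hA : i ∈ A := by
      by_contra hA
      have := congrFun h i
      simp only [step, hA, if_false] at this
      exact hi this.symm
    have := congrFun h i
    simpa only [step, hA, if_true] using this
  · simp only [hi, if_false]
    have : c i = c' i := by simpa [diffSet, not_not] using hi
    exact this.symm

lemma nakamura_forward {d : ℕ} {Q : Type*} (N : Finset (Cell d)) (h0 : (0 : Cell d) ∈ N)
    (hsym : ∀ n ∈ N, -n ∈ N) (δ γ : (↥N → Q) → Q) (c c' : Cell d → QBar Q)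
    (h : c' = step N (deltaBar N h0 δ γ) (diffSet c c') c) :
    c = step N (gammaBar N h0 δ γ) (diffSet c c') c' := by
  have key : ∀ j : Cell d, c' j = c j ∨
      (¬ Ahead N h0 (fun n => c (j + n.1)) ∧
       old (c j) = γ (currLoc N h0 (fun n => c (j + n.1))) ∧
       c' j = (δ (currLoc N h0 (fun n => c (j + n.1))), curr (c j),
         timeStamp (c j) + 1)) := by
    intro j
    have h00 : c (j + ((⟨0, h0⟩ : ↥N) : Cell d)) = c j := by
      show c (j + 0) = c j; rw [add_zero]
    by_cases hj : j ∈ diffSet c c'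
    · have hj' : c' j = deltaBar N h0 δ γ (fun n => c (j + n.1)) := by
        rw [h]; simp [step, hj]
      rw [deltaBar] at hj'
      rw [h00] at hj'
      split_ifs at hj' with hcond
      · exact Or.inr ⟨hcond.1, hcond.2, hj'⟩
      · exact Or.inl hj'
    · have : c j = c' j := by simpa [diffSet, not_not] using hj
      exact Or.inl this.symm
  funext i
  simp only [step]
  by_cases hi : i ∈ diffSet c c'
  case neg =>
    simp only [hi, if_false]
    have : c i = c' i := by simpa [diffSet, not_not] using hi
    exact this
  simp only [hi, if_true]
  have hine : c i ≠ c' i := hi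
  rcases key i with heq | ⟨hAh, hold, hci'⟩
  · exact absurd heq.symm hine
  set t := timeStamp (c i) with ht
  set ℓ : ↥N → QBar Q := fun n => c (i + n.1) with hℓ
  set ℓ' : ↥N → QBar Q := fun n => c' (i + n.1) with hℓ'
  have h00 : ℓ ⟨0, h0⟩ = c i := by show c (i + 0) = c i; rw [add_zero]
  have h00' : ℓ' ⟨0, h0⟩ = c' i := by show c' (i + 0) = c' i; rw [add_zero]
  simp only [Ahead, not_exists, h00] at hAh
  -- every neighbor of i (in c) has timestamp t or t+1
  have hts : ∀ n : ↥N, timeStamp (ℓ n) = t ∨ timeStamp (ℓ n) = t + 1 := by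
    intro n
    exact zmod3_A t (timeStamp (ℓ n)) (hAh n)
  -- dichotomy for each neighbor
  have hnb : ∀ n : ↥N, (ℓ' n = ℓ n) ∨
      (timeStamp (ℓ n) = t ∧ old (ℓ' n) = curr (ℓ n) ∧
        timeStamp (ℓ' n) = t + 1) := by
    intro n
    rcases key (i + n.1) with heq | ⟨hAj, _, hcj'⟩
    · exact Or.inl heq
    · right
      have hmem : -n.1 ∈ N := hsym n.1 n.2
      have hji : i + n.1 + (-n.1 : Cell d) = i := add_neg_cancel_right i n.1
      have hnot : ¬ timeStamp (c (i + n.1)) = timeStamp (c i) + 1 := by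
        intro hcon
        refine hAj ⟨⟨-n.1, hmem⟩, ?_⟩
        show timeStamp (c (i + n.1 + 0)) = timeStamp (c (i + n.1 + -n.1)) + 1
        rw [add_zero, hji]; exact hcon
      have htj : timeStamp (ℓ n) = t := by
        rcases hts n with h1 | h1
        · exact h1
        · exact absurd h1 hnot
      refine ⟨htj, ?_, ?_⟩
      · show old (c' (i + n.1)) = curr (c (i + n.1)); rw [hcj']; rfl
      · show timeStamp (c' (i + n.1)) = t + 1
        rw [hcj']
        show timeStamp (c (i + n.1)) + 1 = t + 1
        rw [htj]
  -- timestamps of neighbors in c' are t or t+1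
  have hts' : ∀ n : ↥N, timeStamp (ℓ' n) = t ∨ timeStamp (ℓ' n) = t + 1 := by
    intro n
    rcases hnb n with heq | ⟨htj, _, ht'⟩
    · rw [heq]; exact hts n
    · exact Or.inr ht'
  have htℓ0 : timeStamp (ℓ ⟨0, h0⟩) = t := by rw [h00]
  have htℓ0' : timeStamp (ℓ' ⟨0, h0⟩) = t + 1 := by rw [h00', hci']; rfl
  -- cell i is not behind in c'
  have hB : ¬ Behind N h0 ℓ' := by
    rintro ⟨n, hn⟩
    rw [htℓ0'] at hn
    exact zmod3_B t (timeStamp (ℓ' n)) (hts' n) hn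
  -- old local configuration in c' equals current local configuration in c
  have hloc : oldLoc N h0 ℓ' = currLoc N h0 ℓ := by
    funext n
    simp only [oldLoc, currLoc, htℓ0, htℓ0']
    rcases hnb n with heq | ⟨htj, ho, ht'⟩
    · rw [heq]
      rcases hts n with h1 | h1
      · rw [if_neg (by rw [h1]; exact zmod3_C t), if_pos h1]
      · rw [if_pos h1, if_neg (by rw [h1]; intro hcon; exact zmod3_C t hcon.symm)]
    · rw [if_pos ht', if_pos htj]
      exact ho
  have hcond : ¬ Behind N h0 ℓ' ∧ curr (ℓ' ⟨0, h0⟩) = δ (oldLoc N h0 ℓ') := by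
    refine ⟨hB, ?_⟩
    rw [h00', hci', hloc]
    rfl
  rw [gammaBar, if_pos hcond, hloc, h00', hci']
  show c i = (old ((δ (currLoc N h0 ℓ), curr (c i), t + 1) : QBar Q),
      γ (currLoc N h0 ℓ),
      timeStamp ((δ (currLoc N h0 ℓ), curr (c i), t + 1) : QBar Q) - 1)
  show c i = (curr (c i), γ (currLoc N h0 ℓ), t + 1 - 1)
  rw [zmod3_G, ← hold, ht]
  rfl

lemma nakamura_backward {d : ℕ} {Q : Type*} (N : Finset (Cell d)) (h0 : (0 : Cell d) ∈ N)
    (hsym : ∀ n ∈ N, -n ∈ N) (δ γ : (↥N → Q) → Q) (c c' : Cell d → QBar Q)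
    (h : c = step N (gammaBar N h0 δ γ) (diffSet c c') c') :
    c' = step N (deltaBar N h0 δ γ) (diffSet c c') c := by
  have key : ∀ j : Cell d, c j = c' j ∨
      (¬ Behind N h0 (fun n => c' (j + n.1)) ∧
       curr (c' j) = δ (oldLoc N h0 (fun n => c' (j + n.1))) ∧
       c j = (old (c' j), γ (oldLoc N h0 (fun n => c' (j + n.1))),
         timeStamp (c' j) - 1)) := by
    intro j
    have h00 : c' (j + ((⟨0, h0⟩ : ↥N) : Cell d)) = c' j := by
      show c' (j + 0) = c' j; rw [add_zero]
    by_cases hj : j ∈ diffSet c c'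
    · have hj' : c j = gammaBar N h0 δ γ (fun n => c' (j + n.1)) := by
        rw [h]; simp [step, hj]
      rw [gammaBar] at hj'
      rw [h00] at hj'
      split_ifs at hj' with hcond
      · exact Or.inr ⟨hcond.1, hcond.2, hj'⟩
      · exact Or.inl hj'
    · have : c j = c' j := by simpa [diffSet, not_not] using hj
      exact Or.inl this
  funext i
  simp only [step]
  by_cases hi : i ∈ diffSet c c'
  case neg =>
    simp only [hi, if_false]
    have : c i = c' i := by simpa [diffSet, not_not] using hi
    exact this.symm
  simp only [hi, if_true]
  have hine : c i ≠ c' i := hi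
  rcases key i with heq | ⟨hBh, hcurr, hci⟩
  · exact absurd heq hine
  set t := timeStamp (c' i) with ht
  set ℓ : ↥N → QBar Q := fun n => c (i + n.1) with hℓ
  set ℓ' : ↥N → QBar Q := fun n => c' (i + n.1) with hℓ'
  have h00 : ℓ ⟨0, h0⟩ = c i := by show c (i + 0) = c i; rw [add_zero]
  have h00' : ℓ' ⟨0, h0⟩ = c' i := by show c' (i + 0) = c' i; rw [add_zero]
  simp only [Behind, not_exists, h00'] at hBh
  -- every neighbor of i (in c') has timestamp t or t-1
  have hts' : ∀ n : ↥N, timeStamp (ℓ' n) = t ∨ timeStamp (ℓ' n) = t - 1 := by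
    intro n
    exact zmod3_D t (timeStamp (ℓ' n)) (hBh n)
  -- dichotomy for each neighbor
  have hnb : ∀ n : ↥N, (ℓ n = ℓ' n) ∨
      (timeStamp (ℓ' n) = t ∧ curr (ℓ n) = old (ℓ' n) ∧
        timeStamp (ℓ n) = t - 1) := by
    intro n
    rcases key (i + n.1) with heq | ⟨hBj, _, hcj⟩
    · exact Or.inl heq
    · right
      have hmem : -n.1 ∈ N := hsym n.1 n.2
      have hji : i + n.1 + (-n.1 : Cell d) = i := add_neg_cancel_right i n.1
      have hnot : ¬ timeStamp (c' (i + n.1)) = timeStamp (c' i) - 1 := by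
        intro hcon
        refine hBj ⟨⟨-n.1, hmem⟩, ?_⟩
        show timeStamp (c' (i + n.1 + 0)) = timeStamp (c' (i + n.1 + -n.1)) - 1
        rw [add_zero, hji]; exact hcon
      have htj : timeStamp (ℓ' n) = t := by
        rcases hts' n with h1 | h1
        · exact h1
        · exact absurd h1 hnot
      refine ⟨htj, ?_, ?_⟩
      · show curr (c (i + n.1)) = old (c' (i + n.1)); rw [hcj]; rfl
      · show timeStamp (c (i + n.1)) = t - 1
        rw [hcj]
        show timeStamp (c' (i + n.1)) - 1 = t - 1
        rw [htj]
  -- timestamps of neighbors in c are t or t-1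
  have hts : ∀ n : ↥N, timeStamp (ℓ n) = t ∨ timeStamp (ℓ n) = t - 1 := by
    intro n
    rcases hnb n with heq | ⟨htj, _, ht'⟩
    · rw [heq]; exact hts' n
    · exact Or.inr ht'
  have htℓ0' : timeStamp (ℓ' ⟨0, h0⟩) = t := by rw [h00']
  have htℓ0 : timeStamp (ℓ ⟨0, h0⟩) = t - 1 := by rw [h00, hci]; rfl
  -- cell i is not ahead in c
  have hA : ¬ Ahead N h0 ℓ := by
    rintro ⟨n, hn⟩
    rw [htℓ0] at hn
    exact zmod3_E t (timeStamp (ℓ n)) (hts n) hn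
  -- current local configuration in c equals old local configuration in c'
  have hloc : currLoc N h0 ℓ = oldLoc N h0 ℓ' := by
    funext n
    simp only [oldLoc, currLoc, htℓ0, htℓ0']
    rcases hnb n with heq | ⟨htj, ho, ht'⟩
    · rw [heq]
      rcases hts' n with h1 | h1
      · rw [if_neg (by rw [h1]; exact zmod3_F t), if_pos h1]
      · rw [if_pos h1, if_neg (by rw [h1]; intro hcon; exact zmod3_F t hcon.symm)]
    · rw [if_pos ht', if_pos htj]
      exact ho
  have hcond : ¬ Ahead N h0 ℓ ∧ old (ℓ ⟨0, h0⟩) = γ (currLoc N h0 ℓ) := by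
    refine ⟨hA, ?_⟩
    rw [h00, hci, hloc]
    rfl
  rw [deltaBar, if_pos hcond, hloc, h00, hci]
  show c' i = (δ (oldLoc N h0 ℓ'),
      curr ((old (c' i), γ (oldLoc N h0 ℓ'), t - 1) : QBar Q),
      timeStamp ((old (c' i), γ (oldLoc N h0 ℓ'), t - 1) : QBar Q) + 1)
  show c' i = (δ (oldLoc N h0 ℓ'), old (c' i), t - 1 + 1)
  rw [zmod3_H, ← hcurr, ht]
  rfl

/-- Nakamura's construction preserves invertibility: if the synchronous global
maps of `C` and `G` are mutually inverse bijections, then for all `c, c'` with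
difference `D`, `c' = Δ̄_D(c)` implies `c = Γ̄_D(c')`; consequently `C̄` and
`Ḡ` are purely asynchronous inverses of each other. -/
theorem nakamura_preserves_invertibility (hd : 0 < d)
    (N : Finset (Cell d)) (h0 : (0 : Cell d) ∈ N) (hsym : ∀ n ∈ N, -n ∈ N)
    (δ γ : (↥N → Q) → Q)
    (hinv1 : Function.LeftInverse (step N γ Set.univ) (step N δ Set.univ))
    (hinv2 : Function.RightInverse (step N γ Set.univ) (step N δ Set.univ)) :
    (∀ c c' : Cell d → QBar Q,
        c' = step N (deltaBar N h0 δ γ) (diffSet c c') c →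
        c = step N (gammaBar N h0 δ γ) (diffSet c c') c') ∧
    PureInverse N N (deltaBar N h0 δ γ) (gammaBar N h0 δ γ) := by
  refine ⟨fun c c' h => nakamura_forward N h0 hsym δ γ c c' h, fun c c' => ?_⟩
  constructor
  · rintro ⟨A, hA⟩
    exact ⟨diffSet c c', nakamura_forward N h0 hsym δ γ c c' (step_diffSet hA)⟩
  · rintro ⟨A, hA⟩
    have h1 : c = step N (gammaBar N h0 δ γ) (diffSet c' c) c' := step_diffSet hA
    have h2 : diffSet c' c = diffSet c c' := by
      ext j; simp [diffSet, ne_comm]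
    rw [h2] at h1
    exact ⟨diffSet c c', nakamura_backward N h0 hsym δ γ c c' h1⟩
end
end

section
/- Two purely asynchronous cellular automata C = (R, N, Q, δ) and G = (R, N, Q, γ) with the same neighborhood are inverse to each other if and only if for every pair of configurations c, c' ∈ Q^R whose difference set satisfies 0 ∈ D_{c,c'} ⊆ {0} ∪ N, we have c' = Δ_{D_{c,c'}}(c) ⇔ c = Γ_{D_{c,c'}}(c'). -/
noncomputable section
open scoped Classical

/-!
A step from `c` reaches `c'` iff the step with active set `D = D_{c,c'}` does (the cells of
`D` must be active, the others may as well be passive), so `PureInverse` amounts to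
`c' = Δ_D(c) ↔ c = Γ_D(c')` for all `c, c'`. At a cell `i ∈ D` this only involves `c` and `c'`
on `i + ({0} ∪ N)`: translating by `i` and performing the update of `c` to `c'` only on
`{0} ∪ N` gives a pair, still related by a step, whose difference set lies between `{0}` and
`{0} ∪ N`.
-/

section

variable {d : ℕ} {Q : Type*}

lemma diffSet_comm (c c' : Cell d → Q) : diffSet c c' = diffSet c' c := by
  ext i
  exact ne_comm

lemma diffSet_piecewise (S : Set (Cell d)) [DecidablePred (· ∈ S)] (c c' : Cell d → Q) :
    diffSet c (S.piecewise c' c) = S ∩ diffSet c c' := by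
  ext j
  by_cases hj : j ∈ S <;> simp [diffSet, hj]

lemma step_diffSet_of_eq_step {N : Finset (Cell d)} {δ : (↥N → Q) → Q} {A : Set (Cell d)}
    {c c' : Cell d → Q} (h : c' = step N δ A c) : c' = step N δ (diffSet c c') c := by
  funext i
  by_cases hi : i ∈ diffSet c c'
  · have hiA : i ∈ A := by
      by_contra hA
      exact hi (by simp [h, step, hA])
    simp only [step, if_pos hi]
    simp [h, step, hiA]
  · simp only [step, if_neg hi]
    exact (not_not.mp hi).symm

lemma exists_eq_step_iff (N : Finset (Cell d)) (δ : (↥N → Q) → Q) (c c' : Cell d → Q) :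
    (∃ A, c' = step N δ A c) ↔ c' = step N δ (diffSet c c') c :=
  ⟨fun ⟨_, h⟩ => step_diffSet_of_eq_step h, fun h => ⟨_, h⟩⟩

lemma pureInverse_iff (N M : Finset (Cell d)) (δ : (↥N → Q) → Q) (γ : (↥M → Q) → Q) :
    PureInverse N M δ γ ↔ ∀ c c' : Cell d → Q,
      (c' = step N δ (diffSet c c') c ↔ c = step M γ (diffSet c c') c') := by
  simp only [PureInverse, exists_eq_step_iff, diffSet_comm _ (_ : Cell d → Q)]

lemma piecewise_eq_step {N : Finset (Cell d)} {δ : (↥N → Q) → Q} {A : Set (Cell d)}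
    {c c' : Cell d → Q} (h : c' = step N δ A c) (S : Set (Cell d)) [DecidablePred (· ∈ S)] :
    S.piecewise c' c = step N δ (S ∩ A) c := by
  funext j
  by_cases hj : j ∈ S <;> simp [h, step, hj]

lemma step_comp_add (N : Finset (Cell d)) (δ : (↥N → Q) → Q) (A : Set (Cell d))
    (c : Cell d → Q) (i : Cell d) :
    (fun j => step N δ A c (i + j)) = step N δ ((i + ·) ⁻¹' A) (fun j => c (i + j)) := by
  funext j
  simp [step, add_assoc]

lemma eq_step_of_restricted {N M : Finset (Cell d)} {δ : (↥N → Q) → Q} {γ : (↥M → Q) → Q}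
    (H : ∀ b b' : Cell d → Q, (0 : Cell d) ∈ diffSet b b' →
      diffSet b b' ⊆ {0} ∪ (↑M : Set (Cell d)) →
      b' = step N δ (diffSet b b') b → b = step M γ (diffSet b b') b')
    {c c' : Cell d → Q} (h : c' = step N δ (diffSet c c') c) :
    c = step M γ (diffSet c c') c' := by
  funext i
  by_cases hi : i ∈ diffSet c c'
  swap
  · simp only [step, if_neg hi]
    exact not_not.mp hi
  set S : Set (Cell d) := {0} ∪ ↑M
  set b : Cell d → Q := fun j => c (i + j)
  set b' := S.piecewise (fun j => c' (i + j)) b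
  have hb' : b' = step N δ (S ∩ (i + ·) ⁻¹' diffSet c c') b := by
    refine piecewise_eq_step ?_ S
    rw [← step_comp_add, ← h]
  have hD : diffSet b b' = S ∩ diffSet b (fun j => c' (i + j)) := diffSet_piecewise _ _ _
  have h0 : (0 : Cell d) ∈ diffSet b b' := by
    rw [hD]
    refine ⟨Or.inl rfl, ?_⟩
    show c (i + 0) ≠ c' (i + 0)
    simpa [diffSet] using hi
  have hback := congrFun (H b b' h0 (hD ▸ Set.inter_subset_left) (step_diffSet_of_eq_step hb')) 0
  simp only [step, if_pos h0, if_pos hi] at hback ⊢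
  calc c i = b 0 := by simp [b]
    _ = γ (fun n => b' (0 + n)) := hback
    _ = γ (fun n => c' (i + n)) := by
      congr 1
      funext n
      have hn : (n : Cell d) ∈ S := Or.inr n.2
      simp [b', hn]

end

theorem pure_inverse_restricted_characterization_general {d : ℕ} {Q : Type*}
    (N : Finset (Cell d)) (δ γ : (↥N → Q) → Q) :
    PureInverse N N δ γ ↔
      ∀ c c' : Cell d → Q,
        (0 : Cell d) ∈ diffSet c c' → diffSet c c' ⊆ {0} ∪ (↑N : Set (Cell d)) →
        (c' = step N δ (diffSet c c') c ↔ c = step N γ (diffSet c c') c') := by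
  rw [pureInverse_iff]
  refine ⟨fun H c c' _ _ => H c c', fun H c c' => ⟨?_, fun h => ?_⟩⟩
  · exact eq_step_of_restricted fun b b' h0 hS => (H b b' h0 hS).1
  · rw [diffSet_comm] at h ⊢
    refine eq_step_of_restricted (fun b b' h0 hS hb => ?_) h
    rw [diffSet_comm] at h0 hS hb ⊢
    exact (H b' b h0 hS).2 hb

/-- Two purely asynchronous CAs with the same neighborhood are inverse to each
other iff the inversion condition holds for all pairs of configurations whose
difference set contains `0` and is contained in `{0} ∪ N`. -/
theorem pure_inverse_restricted_characterization {d : ℕ} {Q : Type*} (hd : 0 < d)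
    (N : Finset (Cell d)) (δ γ : (↥N → Q) → Q) :
    PureInverse N N δ γ ↔
      ∀ c c' : Cell d → Q,
        (0 : Cell d) ∈ diffSet c c' → diffSet c c' ⊆ {0} ∪ (↑N : Set (Cell d)) →
        (c' = step N δ (diffSet c c') c ↔ c = step N γ (diffSet c c') c') :=
  pure_inverse_restricted_characterization_general N δ γ
end
end

section
/- Phase space invertibility is decidable for fully asynchronous one-dimensional cellular automata: given C = (Z, N, Q, δ), letting A = {−|Q|^{2m+1}, …, |Q|^{2m+1}} with m the maximal neighbor distance, and T = {0} ∪ N ∪ A ∪ (A+N), one can decide invertibility by checking, for each of the finitely many γ : Q^N → Q, conditions on finite configurations in Q^T only: (i) for all c, c' ∈ Q^T with D_{c,c'} = {0}: c' = Δ_{{0}}(c) ⇔ c = Γ_{{0}}(c'); (ii) for all c ∈ Q^T: c = Δ_{{0}}(c) ⇒ ∃a ∈ A, c = Γ_{{a}}(c), and c = Γ_{{0}}(c) ⇒ ∃a ∈ A, c = Δ_{{a}}(c). -/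
noncomputable section
open scoped Classical

/-- The global transition function `Δ_A` of a one-dimensional CA with
neighborhood `N ⊆ ℤ`, local rule `δ` and active cell set `A`. -/
def stepZ {Q : Type*} (N : Finset ℤ) (δ : (↥N → Q) → Q)
    (A : Set ℤ) (c : ℤ → Q) : ℤ → Q :=
  fun i => if i ∈ A then δ (fun n => c (i + n.1)) else c i

/-- The difference set `D_{c,c'}` of two global configurations. -/
def diffSetZ {Q : Type*} (c c' : ℤ → Q) : Set ℤ := {i | c i ≠ c' i}

/-- Two fully asynchronous one-dimensional CAs are inverse to each other. -/
def FullInverseZ {Q : Type*} (N M : Finset ℤ)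
    (δ : (↥N → Q) → Q) (γ : (↥M → Q) → Q) : Prop :=
  ∀ c c' : ℤ → Q,
    (∃ a : ℤ, c' = stepZ N δ {a} c) ↔ (∃ a : ℤ, c = stepZ M γ {a} c')

/-- The maximal distance `m` of a neighbor (`0` used in place of `-∞` for `N = ∅`). -/
def mrad (N : Finset ℤ) : ℕ := N.sup fun n => n.natAbs

/-- The finite set `𝒜` of active candidate cells:
`{-|Q|^(2m+1), …, |Q|^(2m+1)}`, or `{0}` when `N = ∅`. -/
def Acand (Q : Type*) [Fintype Q] (N : Finset ℤ) : Set ℤ :=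
  if N = ∅ then {0}
  else {a : ℤ | |a| ≤ (Fintype.card Q : ℤ) ^ (2 * mrad N + 1)}

/-- The finite test window `T = {0} ∪ N ∪ 𝒜 ∪ (𝒜 + N)`. -/
def testWindowZ (Q : Type*) [Fintype Q] (N : Finset ℤ) : Set ℤ :=
  {0} ∪ (↑N : Set ℤ) ∪ Acand Q N ∪ {x : ℤ | ∃ a ∈ Acand Q N, ∃ n ∈ N, x = a + n}
section Aux
variable {Q : Type*}

/-- The local pattern of `c` around `a`. -/
def pat (N : Finset ℤ) (c : ℤ → Q) (a : ℤ) : ↥N → Q := fun n => c (a + (n : ℤ))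

/-- Cell `a` is an `η`-fixed cell of `c`. -/
def locFix (N : Finset ℤ) (η : (↥N → Q) → Q) (c : ℤ → Q) (a : ℤ) : Prop :=
  c a = η (pat N c a)

lemma stepZ_single_apply (N : Finset ℤ) (η : (↥N → Q) → Q) (a : ℤ) (c : ℤ → Q) (x : ℤ) :
    stepZ N η {a} c x = if x = a then η (pat N c a) else c x := by
  unfold stepZ pat
  by_cases h : x = a
  · subst h; simp
  · simp [h, Set.mem_singleton_iff]

lemma eq_step_iff {N : Finset ℤ} {η : (↥N → Q) → Q} {a : ℤ} {c c' : ℤ → Q} :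
    c' = stepZ N η {a} c ↔ (c' a = η (pat N c a) ∧ ∀ x, x ≠ a → c' x = c x) := by
  constructor
  · intro h
    constructor
    · rw [h, stepZ_single_apply]; simp
    · intro x hx; rw [h, stepZ_single_apply]; simp [hx]
  · rintro ⟨h1, h2⟩
    funext x
    rw [stepZ_single_apply]
    by_cases hx : x = a
    · subst hx; simp [h1]
    · simp [hx, h2 x hx]

lemma exists_eq_step_self_iff {N : Finset ℤ} {η : (↥N → Q) → Q} {c : ℤ → Q} :
    (∃ a : ℤ, c = stepZ N η {a} c) ↔ ∃ a : ℤ, locFix N η c a := by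
  constructor
  · rintro ⟨a, ha⟩; exact ⟨a, (eq_step_iff.mp ha).1⟩
  · rintro ⟨a, ha⟩; exact ⟨a, eq_step_iff.mpr ⟨ha, fun x _ => rfl⟩⟩

lemma exists_eq_step_iff_of_ne {N : Finset ℤ} {η : (↥N → Q) → Q} {c c' : ℤ → Q} {d : ℤ}
    (h1 : c' d ≠ c d) (h2 : ∀ x, x ≠ d → c' x = c x) :
    (∃ a : ℤ, c' = stepZ N η {a} c) ↔ c' d = η (pat N c d) := by
  constructor
  · rintro ⟨a, ha⟩
    rw [eq_step_iff] at ha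
    by_cases had : a = d
    · subst had; exact ha.1
    · exact absurd (ha.2 d fun hx => had hx.symm) h1
  · intro h; exact ⟨d, eq_step_iff.mpr ⟨h, h2⟩⟩

lemma not_exists_eq_step_of_two {N : Finset ℤ} {η : (↥N → Q) → Q} {c c' : ℤ → Q} {d e : ℤ}
    (hde : d ≠ e) (h1 : c' d ≠ c d) (h2 : c' e ≠ c e) :
    ¬ ∃ a : ℤ, c' = stepZ N η {a} c := by
  rintro ⟨a, ha⟩
  rw [eq_step_iff] at ha
  by_cases had : d = a
  · exact h2 (ha.2 e fun h => hde (had.trans h.symm))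
  · exact h1 (ha.2 d had)

lemma abs_le_mrad {N : Finset ℤ} {n : ℤ} (hn : n ∈ N) : |n| ≤ (mrad N : ℤ) := by
  have := Finset.le_sup (f := fun n : ℤ => n.natAbs) hn
  have h2 : n.natAbs ≤ mrad N := this
  rw [Int.abs_eq_natAbs]
  exact_mod_cast h2

lemma locFix_congr {N : Finset ℤ} {η : (↥N → Q) → Q} {c c' : ℤ → Q} {a b : ℤ}
    (h : ∀ t : ℤ, |t| ≤ (mrad N : ℤ) → c (a + t) = c' (b + t)) :
    locFix N η c a ↔ locFix N η c' b := by
  have hp : pat N c a = pat N c' b := by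
    funext n
    exact h n (abs_le_mrad n.2)
  have h0 : c a = c' b := by
    have := h 0 (by positivity)
    simpa using this
  unfold locFix
  rw [hp, h0]

end Aux
section Window
variable {Q : Type*} [Fintype Q]

lemma zero_mem_Acand (N : Finset ℤ) : (0 : ℤ) ∈ Acand Q N := by
  unfold Acand
  by_cases h : N = ∅
  · simp [h]
  · simp only [if_neg h, Set.mem_setOf_eq, abs_zero]
    positivity

lemma Acand_subset_T (N : Finset ℤ) : Acand Q N ⊆ testWindowZ Q N := by
  intro a ha
  unfold testWindowZ
  exact Or.inl (Or.inr ha)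

lemma zero_mem_T (N : Finset ℤ) : (0 : ℤ) ∈ testWindowZ Q N :=
  Acand_subset_T N (zero_mem_Acand N)

lemma window_iff {N : Finset ℤ} (η : (↥N → Q) → Q) {a : ℤ} (ha : a ∈ testWindowZ Q N)
    {c c' : ℤ → Q} (hoff : ∀ x, x ≠ a → c' x = c x) :
    (∀ i ∈ testWindowZ Q N, c' i = stepZ N η {a} c i) ↔ c' a = η (pat N c a) := by
  constructor
  · intro h
    have := h a ha
    rwa [stepZ_single_apply, if_pos rfl] at this
  · intro h i _
    rw [stepZ_single_apply]
    by_cases hi : i = a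
    · subst hi; simp [h]
    · simp [hi, hoff i hi]

end Window
section Glue
variable {Q : Type*}

/-- Periodic continuation built from the segment `[i, j)` of `c`. -/
def gl (c : ℤ → Q) (i j : ℤ) : ℤ → Q := fun x => c (i + (x - i) % (j - i))

lemma emod_add_period (y p : ℤ) : (y + p) % p = y % p := by
  have := Int.add_mul_emod_self_left (a := y) (b := p) (c := 1)
  simpa using this

lemma gl_congr_mod {c : ℤ → Q} {i j : ℤ} {x y : ℤ}
    (h : (x - i) % (j - i) = (y - i) % (j - i)) : gl c i j x = gl c i j y := by
  unfold gl; rw [h]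

lemma gl_shift (c : ℤ → Q) (i j x : ℤ) : gl c i j (x + (j - i)) = gl c i j x := by
  apply gl_congr_mod
  have : x + (j - i) - i = (x - i) + (j - i) := by ring
  rw [this, emod_add_period]

variable {c : ℤ → Q} {m : ℕ} {i j : ℤ}

lemma gl_eq_of_ge (hij : i < j) (hw : ∀ t : ℤ, |t| ≤ (m : ℤ) → c (i + t) = c (j + t)) :
    ∀ (n : ℕ) (x : ℤ), (x - i).toNat = n → i ≤ x → x ≤ j + m → gl c i j x = c x := by
  intro n
  induction n using Nat.strong_induction_on with
  | _ n ih =>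
    intro x hxn h1 h2
    by_cases hxj : x < j
    · unfold gl
      rw [Int.emod_eq_of_lt (by omega) (by omega)]
      congr 1; ring
    · -- x ≥ j : recurse to x - (j - i)
      have hrec := ih (x - (j - i) - i).toNat (by omega) (x - (j - i)) rfl (by omega) (by omega)
      have hshift : gl c i j x = gl c i j (x - (j - i)) := by
        have : x = (x - (j - i)) + (j - i) := by ring
        rw [this, gl_shift]
        congr 1; ring
      have hc : c (x - (j - i)) = c x := by
        have ht := hw (x - j) (by rw [abs_le]; omega)
        have e1 : i + (x - j) = x - (j - i) := by ring
        have e2 : j + (x - j) = x := by ring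
        rw [e1, e2] at ht
        exact ht
      rw [hshift, hrec, hc]

lemma gl_eq_of_lt (hij : i < j) (hw : ∀ t : ℤ, |t| ≤ (m : ℤ) → c (i + t) = c (j + t)) :
    ∀ (n : ℕ) (x : ℤ), (i - x).toNat = n → i - m ≤ x → x < i → gl c i j x = c x := by
  intro n
  induction n using Nat.strong_induction_on with
  | _ n ih =>
    intro x hxn h1 h2
    have hc : c (x + (j - i)) = c x := by
      have ht := hw (x - i) (by rw [abs_le]; omega)
      have e1 : i + (x - i) = x := by ring
      have e2 : j + (x - i) = x + (j - i) := by ring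
      rw [e1, e2] at ht
      exact ht.symm
    have hshift : gl c i j x = gl c i j (x + (j - i)) := (gl_shift c i j x).symm
    by_cases hge : i ≤ x + (j - i)
    · have := gl_eq_of_ge hij hw (x + (j - i) - i).toNat (x + (j - i)) rfl hge (by omega)
      rw [hshift, this, hc]
    · have := ih (i - (x + (j - i))).toNat (by omega) (x + (j - i)) rfl (by omega) (by omega)
      rw [hshift, this, hc]

lemma gl_eq_core (hij : i < j) (hw : ∀ t : ℤ, |t| ≤ (m : ℤ) → c (i + t) = c (j + t))
    {x : ℤ} (h1 : i - m ≤ x) (h2 : x ≤ j + m) : gl c i j x = c x := by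
  by_cases h : i ≤ x
  · exact gl_eq_of_ge hij hw _ x rfl h h2
  · exact gl_eq_of_lt hij hw _ x rfl h1 (by omega)

end Glue
section Pump
variable {Q : Type*} [Fintype Q]

lemma exists_repeat (m : ℕ) (c : ℤ → Q) (lo : ℤ) :
    ∃ i j : ℤ, lo ≤ i ∧ i < j ∧ j ≤ lo + (Fintype.card Q : ℤ) ^ (2 * m + 1) ∧
      ∀ t : ℤ, |t| ≤ (m : ℤ) → c (i + t) = c (j + t) := by
  classical
  set K : ℤ := (Fintype.card Q : ℤ) ^ (2 * m + 1) with hK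
  have hQ : Nonempty Q := ⟨c 0⟩
  have hKnat : K = ((Fintype.card Q ^ (2 * m + 1) : ℕ) : ℤ) := by push_cast; rfl
  have hK0 : 0 ≤ K := by rw [hKnat]; positivity
  set f : ℤ → (Fin (2 * m + 1) → Q) := fun a u => c (a + (u.1 : ℤ) - m) with hf
  have hcard : Fintype.card (Fin (2 * m + 1) → Q) < (Finset.Icc lo (lo + K)).card := by
    rw [Int.card_Icc]
    have : (lo + K + 1 - lo) = K + 1 := by ring
    rw [this, hKnat]
    rw [Fintype.card_fun, Fintype.card_fin]
    omega
  obtain ⟨x, hx, y, hy, hxy, hfxy⟩ :=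
    Finset.exists_ne_map_eq_of_card_lt_of_maps_to hcard
      (fun a _ => Finset.mem_univ (f a))
  rw [Finset.mem_Icc] at hx hy
  have key : ∀ x y : ℤ, f x = f y → ∀ t : ℤ, |t| ≤ (m : ℤ) → c (x + t) = c (y + t) := by
    intro x y hfe t ht
    rw [abs_le] at ht
    have hu : ((t + m).toNat : ℤ) = t + m := Int.toNat_of_nonneg (by omega)
    set u : Fin (2 * m + 1) := ⟨(t + m).toNat, by omega⟩ with huu
    have := congrFun hfe u
    rw [hf] at this
    dsimp only at this
    have e1 : x + ((t + m).toNat : ℤ) - m = x + t := by omega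
    have e2 : y + ((t + m).toNat : ℤ) - m = y + t := by omega
    rw [e1, e2] at this
    exact this
  rcases lt_or_gt_of_ne hxy with h | h
  · exact ⟨x, y, hx.1, h, hy.2, key x y hfxy⟩
  · exact ⟨y, x, hy.1, h, hx.2, key y x hfxy.symm⟩

lemma pump {N : Finset ℤ} (η₁ η₂ : (↥N → Q) → Q)
    (Hfix : ∀ c : ℤ → Q, (∃ a, locFix N η₁ c a) ↔ (∃ a, locFix N η₂ c a))
    {c : ℤ → Q} (h0 : locFix N η₁ c 0) :
    ∃ a : ℤ, |a| ≤ (Fintype.card Q : ℤ) ^ (2 * mrad N + 1) ∧ locFix N η₂ c a := by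
  classical
  set m := mrad N with hm
  set K : ℤ := (Fintype.card Q : ℤ) ^ (2 * m + 1) with hK
  have hQ : Nonempty Q := ⟨c 0⟩
  have hcard : 1 ≤ Fintype.card Q := Fintype.card_pos
  have hK1 : 1 ≤ K := by
    rw [hK]
    calc (1 : ℤ) = 1 ^ (2 * m + 1) := (one_pow _).symm
    _ ≤ (Fintype.card Q : ℤ) ^ (2 * m + 1) := by
        apply pow_le_pow_left₀ (by norm_num) (by exact_mod_cast hcard)
  by_contra hcon
  push_neg at hcon
  obtain ⟨i, j, hi0, hij, hjK, hwR⟩ := exists_repeat m c 0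
  obtain ⟨i', j', hi'0, hij', hj'0, hwL⟩ := exists_repeat m c (-K)
  have hKe : (Fintype.card Q : ℤ) ^ (2 * m + 1) = K := hK.symm
  rw [hKe] at hjK hj'0
  have hj'0' : j' ≤ 0 := by omega
  set d : ℤ → Q := fun x => if j ≤ x then gl c i j x else if x ≤ i' then gl c i' j' x else c x
    with hd
  have Dc : ∀ x : ℤ, i' - m ≤ x → x ≤ j + m → d x = c x := by
    intro x h1 h2
    rw [hd]; dsimp only
    split_ifs with hx1 hx2
    · exact gl_eq_core hij hwR (by omega) h2
    · exact gl_eq_core hij' hwL h1 (by omega)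
    · rfl
  have hword : ∀ a : ℤ, ∃ b : ℤ, -K ≤ b ∧ b ≤ K ∧
      ∀ t : ℤ, |t| ≤ (m : ℤ) → d (a + t) = c (b + t) := by
    intro a
    rcases le_or_gt a j with haj | haj
    · rcases le_or_gt i' a with hia | hia
      · refine ⟨a, by omega, by omega, fun t ht => ?_⟩
        rw [abs_le] at ht
        rw [Dc (a + t) (by omega) (by omega)]
      · -- a < i' : left glue zone
        set p' := j' - i' with hp'
        have hp'0 : 0 < p' := by omega
        have hbr1 : 0 ≤ (a - i') % p' := Int.emod_nonneg _ (by omega)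
        have hbr2 : (a - i') % p' < p' := Int.emod_lt_of_pos _ hp'0
        refine ⟨i' + (a - i') % p', by omega, by omega, fun t ht => ?_⟩
        rw [abs_le] at ht
        have hgl : d (a + t) = gl c i' j' (a + t) := by
          rw [hd]; dsimp only
          split_ifs with hx1 hx2
          · rw [gl_eq_core hij hwR (by omega) (by omega),
              gl_eq_core hij' hwL (by omega) (by omega)]
          · rfl
          · rw [gl_eq_core hij' hwL (by omega) (by omega)]
        rw [hgl]
        have hmod : gl c i' j' (a + t) = gl c i' j' (i' + (a - i') % p' + t) := by
          apply gl_congr_mod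
          rw [← hp']
          have e1 : a + t - i' = (a - i') + t := by ring
          have e2 : i' + (a - i') % p' + t - i' = (a - i') % p' + t := by ring
          rw [e1, e2, Int.add_emod (a - i') t, Int.add_emod ((a - i') % p') t,
            Int.emod_emod_of_dvd _ dvd_rfl]
        rw [hmod]
        exact gl_eq_core hij' hwL (by omega) (by omega)
    · -- j < a : right glue zone
      set p := j - i with hp
      have hp0 : 0 < p := by omega
      have hbr1 : 0 ≤ (a - i) % p := Int.emod_nonneg _ (by omega)
      have hbr2 : (a - i) % p < p := Int.emod_lt_of_pos _ hp0
      refine ⟨i + (a - i) % p, by omega, by omega, fun t ht => ?_⟩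
      rw [abs_le] at ht
      have hgl : d (a + t) = gl c i j (a + t) := by
        rw [hd]; dsimp only
        split_ifs with hx1 hx2
        · rfl
        · rw [gl_eq_core hij hwR (by omega) (by omega),
            gl_eq_core hij' hwL (by omega) (by omega)]
        · rw [gl_eq_core hij hwR (by omega) (by omega)]
      rw [hgl]
      have hmod : gl c i j (a + t) = gl c i j (i + (a - i) % p + t) := by
        apply gl_congr_mod
        rw [← hp]
        have e1 : a + t - i = (a - i) + t := by ring
        have e2 : i + (a - i) % p + t - i = (a - i) % p + t := by ring
        rw [e1, e2, Int.add_emod (a - i) t, Int.add_emod ((a - i) % p) t,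
          Int.emod_emod_of_dvd _ dvd_rfl]
      rw [hmod]
      exact gl_eq_core hij hwR (by omega) (by omega)
  have hd0 : locFix N η₁ d 0 := by
    refine (locFix_congr (c' := c) (b := 0) fun t ht => ?_).mpr h0
    rw [abs_le] at ht
    rw [← hm] at ht
    exact Dc (0 + t) (by omega) (by omega)
  obtain ⟨a, ha⟩ := (Hfix d).mp ⟨0, hd0⟩
  obtain ⟨b, hb1, hb2, hb⟩ := hword a
  exact hcon b (abs_le.mpr ⟨hb1, hb2⟩) ((locFix_congr hb).mp ha)

end Pump
section Forward
variable {Q : Type*} [Fintype Q]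

lemma exists_ne_pair (h : 3 ≤ Fintype.card Q) (x y : Q) : ∃ z : Q, z ≠ x ∧ z ≠ y := by
  classical
  by_contra h'
  push_neg at h'
  have hsub : (Finset.univ : Finset Q) ⊆ {x, y} := by
    intro z _
    by_cases hz : z = x
    · simp [hz]
    · simp [h' z hz]
  have h1 := Finset.card_le_card hsub
  rw [Finset.card_univ] at h1
  have h2 : ({x, y} : Finset Q).card ≤ 2 := by
    calc ({x, y} : Finset Q).card ≤ ({y} : Finset Q).card + 1 := Finset.card_insert_le _ _
    _ = 2 := by rw [Finset.card_singleton]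
  omega

lemma eq_or_eq_of_card_le_two (h : Fintype.card Q ≤ 2) {x y : Q} (hxy : x ≠ y) (z : Q) :
    z = x ∨ z = y := by
  classical
  by_contra h'
  push_neg at h'
  have hcard : ({z, x, y} : Finset Q).card = 3 := by
    rw [Finset.card_insert_of_notMem (by simp [h'.1, h'.2]),
      Finset.card_insert_of_notMem (by simp [hxy]), Finset.card_singleton]
  have := Finset.card_le_univ ({z, x, y} : Finset Q)
  omega

variable {N M : Finset ℤ} {δ : (↥N → Q) → Q} {γ : (↥M → Q) → Q}

/-- Characterization of `γ` on single-cell differences derived from invertibility. -/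
lemma char (hinv : FullInverseZ N M δ γ) (c : ℤ → Q) (b : Q) (hb : b ≠ c 0) :
    c 0 = δ (pat N (Function.update c 0 b) 0) ↔ b = γ (pat M c 0) := by
  have h1 := hinv (Function.update c 0 b) c
  have hL : (∃ a : ℤ, c = stepZ N δ {a} (Function.update c 0 b)) ↔
      c 0 = δ (pat N (Function.update c 0 b) 0) := by
    apply exists_eq_step_iff_of_ne
    · rw [Function.update_self]; exact fun h => hb h.symm
    · intro x hx; rw [Function.update_of_ne hx]
  have hR : (∃ a : ℤ, Function.update c 0 b = stepZ M γ {a} c) ↔ b = γ (pat M c 0) := by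
    have := exists_eq_step_iff_of_ne (η := γ) (c := c) (c' := Function.update c 0 b) (d := 0)
      (by rw [Function.update_self]; exact hb) (fun x hx => Function.update_of_ne hx _ _)
    rwa [Function.update_self] at this
  rw [← hL, ← hR]
  exact h1

/-- Under invertibility, `γ (pat M c 0)` only depends on the restriction of `c` to `N`. -/
lemma indep (hinv : FullInverseZ N M δ γ) (c c' : ℤ → Q)
    (hagree : ∀ n : ℤ, n ∈ N → c n = c' n) : γ (pat M c 0) = γ (pat M c' 0) := by
  classical
  have hDeq : ∀ b : Q,
      δ (pat N (Function.update c 0 b) 0) = δ (pat N (Function.update c' 0 b) 0) := by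
    intro b; congr 1; funext n
    show Function.update c 0 b (0 + (n : ℤ)) = Function.update c' 0 b (0 + (n : ℤ))
    rw [zero_add]
    by_cases hn : (n : ℤ) = 0
    · rw [hn, Function.update_self, Function.update_self]
    · rw [Function.update_of_ne hn, Function.update_of_ne hn]; exact hagree n n.2
  by_cases h00 : c 0 = c' 0
  · by_cases hg : γ (pat M c 0) = c 0
    · by_cases hg' : γ (pat M c' 0) = c' 0
      · rw [hg, hg', h00]
      · exfalso
        have h2 := (char hinv c' (γ (pat M c' 0)) hg').mpr rfl
        have h3 : c 0 = δ (pat N (Function.update c 0 (γ (pat M c' 0))) 0) := by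
          rw [← hDeq, ← h00] at h2; exact h2
        have h4 := (char hinv c (γ (pat M c' 0)) (by rw [h00]; exact hg')).mp h3
        exact hg' (by rw [h4, hg]; exact h00)
    · have h1 := (char hinv c (γ (pat M c 0)) hg).mpr rfl
      have h2 : c' 0 = δ (pat N (Function.update c' 0 (γ (pat M c 0))) 0) := by
        rw [← hDeq, ← h00]; exact h1
      exact (char hinv c' (γ (pat M c 0)) (by rw [← h00]; exact hg)).mp h2
  · -- the two configurations differ at `0`, hence `0 ∉ N`
    have h0N : (0 : ℤ) ∉ N := fun h => h00 (hagree 0 h)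
    have hDind : ∀ (u : ℤ → Q) (b : Q),
        δ (pat N (Function.update u 0 b) 0) = δ (pat N u 0) := by
      intro u b; congr 1; funext n
      show Function.update u 0 b (0 + (n : ℤ)) = u (0 + (n : ℤ))
      rw [zero_add]
      exact Function.update_of_ne (fun (h : (n : ℤ) = 0) => h0N (by rw [← h]; exact n.2)) _ _
    have hr' : δ (pat N c' 0) = δ (pat N c 0) := by
      congr 1; funext n
      show c' (0 + (n : ℤ)) = c (0 + (n : ℤ))
      rw [zero_add]
      exact (hagree n n.2).symm
    set r := δ (pat N c 0) with hr
    have hcard2 : Fintype.card Q ≤ 2 := by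
      by_contra hc3
      push_neg at hc3
      set u := Function.update c 0 r with hu
      have hu0 : u 0 = r := Function.update_self _ _ _
      have hud : ∀ b : Q, δ (pat N (Function.update u 0 b) 0) = r := by
        intro b; rw [hDind, hu, hDind]
      have hall : ∀ b : Q, b ≠ u 0 → b = γ (pat M u 0) := fun b hb =>
        (char hinv u b hb).mp (by rw [hud b, hu0])
      obtain ⟨z, hz1, hz2⟩ := exists_ne_pair (by omega) (u 0) (γ (pat M u 0))
      exact hz2 (hall z hz1)
    have hchar : ∀ b : Q, b ≠ c 0 → (c 0 = r ↔ b = γ (pat M c 0)) := by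
      intro b hb
      have := char hinv c b hb
      rwa [hDind] at this
    have hchar' : ∀ b : Q, b ≠ c' 0 → (c' 0 = r ↔ b = γ (pat M c' 0)) := by
      intro b hb
      have := char hinv c' b hb
      rwa [hDind, hr'] at this
    rcases eq_or_eq_of_card_le_two hcard2 h00 r with hrc | hrc'
    · have h1 : c' 0 = γ (pat M c 0) := (hchar (c' 0) (fun h => h00 h.symm)).mp hrc.symm
      have h2 : γ (pat M c' 0) = c' 0 := by
        by_contra hne
        have h3 := (hchar' (γ (pat M c' 0)) hne).mpr rfl
        exact h00 (h3 ▸ hrc).symm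
      rw [← h1, h2]
    · have hrnc : c 0 ≠ r := fun h => h00 (h.trans hrc')
      have h1 : γ (pat M c 0) = c 0 := by
        by_contra hne
        exact hrnc ((hchar (γ (pat M c 0)) hne).mpr rfl)
      have h2 : c 0 = γ (pat M c' 0) := (hchar' (c 0) h00).mp hrc'.symm
      rw [h1, ← h2]

end Forward
section Final
variable {Q : Type*} [Fintype Q]

lemma locFix_shift {N : Finset ℤ} (η : (↥N → Q) → Q) (c : ℤ → Q) (a b : ℤ) :
    locFix N η (fun x => c (a + x)) b ↔ locFix N η c (a + b) := by
  apply locFix_congr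
  intro t _
  show c (a + (b + t)) = c (a + b + t)
  congr 1
  ring

lemma diff_spec {c c' : ℤ → Q} (h : diffSetZ c c' = {0}) :
    c 0 ≠ c' 0 ∧ ∀ x : ℤ, x ≠ 0 → c x = c' x := by
  constructor
  · have h0 : (0 : ℤ) ∈ diffSetZ c c' := by rw [h]; exact Set.mem_singleton _
    exact h0
  · intro x hx
    by_contra hne
    have hmem : x ∈ diffSetZ c c' := hne
    rw [h] at hmem
    exact hx hmem

lemma pumpA {N : Finset ℤ} (η₁ η₂ : (↥N → Q) → Q)
    (Hfix : ∀ c : ℤ → Q, (∃ a, locFix N η₁ c a) ↔ (∃ a, locFix N η₂ c a))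
    {c : ℤ → Q} (h0 : locFix N η₁ c 0) : ∃ a ∈ Acand Q N, locFix N η₂ c a := by
  by_cases hN : N = ∅
  · have hpat : ∀ (u v : ℤ → Q) (a b : ℤ), pat N u a = pat N v b := by
      intro u v a b; funext n
      exact absurd n.2 (Finset.eq_empty_iff_forall_notMem.mp hN _)
    set ct : ℤ → Q := fun _ => c 0 with hct
    have h1 : locFix N η₁ ct 0 := by
      unfold locFix at h0 ⊢
      rw [hpat ct c 0 0]
      exact h0
    obtain ⟨a, ha⟩ := (Hfix ct).mp ⟨0, h1⟩
    have h2 : locFix N η₂ c 0 := by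
      unfold locFix at ha ⊢
      rw [hpat c ct 0 a]
      exact ha
    exact ⟨0, zero_mem_Acand N, h2⟩
  · obtain ⟨a, haK, ha⟩ := pump η₁ η₂ Hfix h0
    refine ⟨a, ?_, ha⟩
    unfold Acand; rw [if_neg hN]; exact haK

end Final

/-- Decidability of phase space invertibility for fully asynchronous
one-dimensional CAs: invertibility is equivalent to one of the finitely many
candidate rules `γ : Q^N → Q` passing checks that only involve the states of
the cells in the finite window `T`. -/
theorem full_invertibility_decidable_check {Q : Type*}
    [Fintype Q] [DecidableEq Q] (N : Finset ℤ) (δ : (↥N → Q) → Q) :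
    (∃ (M : Finset ℤ) (γ : (↥M → Q) → Q), FullInverseZ N M δ γ) ↔
      (∃ γ : (↥N → Q) → Q,
        (∀ c c' : ℤ → Q, diffSetZ c c' = {0} →
          ((∀ i ∈ testWindowZ Q N, c' i = stepZ N δ {(0 : ℤ)} c i) ↔
           (∀ i ∈ testWindowZ Q N, c i = stepZ N γ {(0 : ℤ)} c' i))) ∧
        (∀ c : ℤ → Q,
          ((∀ i ∈ testWindowZ Q N, c i = stepZ N δ {(0 : ℤ)} c i) →
            ∃ a ∈ Acand Q N, ∀ i ∈ testWindowZ Q N, c i = stepZ N γ {a} c i) ∧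
          ((∀ i ∈ testWindowZ Q N, c i = stepZ N γ {(0 : ℤ)} c i) →
            ∃ a ∈ Acand Q N, ∀ i ∈ testWindowZ Q N, c i = stepZ N δ {a} c i))) := by
  constructor
  · rintro ⟨M, γ, hinv⟩
    by_cases hQne : Nonempty Q
    · obtain ⟨q0⟩ := hQne
      set γ' : (↥N → Q) → Q :=
        fun p => γ (pat M (fun x => if h : x ∈ N then p ⟨x, h⟩ else q0) 0) with hγ'def
      have hγA : ∀ (c : ℤ → Q) (a : ℤ), γ' (pat N c a) = γ (pat M c a) := by
        intro c a
        rw [hγ'def]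
        dsimp only
        have h1 : γ (pat M (fun x => if h : x ∈ N then pat N c a ⟨x, h⟩ else q0) 0)
            = γ (pat M (fun x => c (a + x)) 0) := by
          apply indep hinv
          intro n hn
          rw [dif_pos hn]
          rfl
        rw [h1]
        congr 1
        funext mm
        show c (a + (0 + (mm : ℤ))) = c (a + (mm : ℤ))
        rw [zero_add]
      have Hfix' : ∀ c : ℤ → Q, (∃ a, locFix N δ c a) ↔ (∃ a, locFix N γ' c a) := by
        intro c
        have h := hinv c c
        rw [exists_eq_step_self_iff, exists_eq_step_self_iff] at h
        constructor
        · intro hx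
          obtain ⟨a, ha⟩ := h.mp hx
          exact ⟨a, by unfold locFix; rw [hγA]; exact ha⟩
        · rintro ⟨a, ha⟩
          apply h.mpr
          refine ⟨a, ?_⟩
          unfold locFix at ha ⊢
          rw [hγA] at ha
          exact ha
      refine ⟨γ', ?_, ?_⟩
      · intro c c' hdiff
        obtain ⟨h0, hoff⟩ := diff_spec hdiff
        rw [window_iff δ (zero_mem_T N) (fun x hx => (hoff x hx).symm),
            window_iff γ' (zero_mem_T N) (fun x hx => hoff x hx)]
        have hupd : Function.update c' 0 (c 0) = c := by
          funext x
          by_cases hx : x = 0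
          · rw [hx, Function.update_self]
          · rw [Function.update_of_ne hx]; exact (hoff x hx).symm
        have hch := char hinv c' (c 0) h0
        rw [hupd] at hch
        rw [hγA]
        exact hch
      · intro c
        constructor
        · intro hw
          have h0 : locFix N δ c 0 :=
            (window_iff δ (zero_mem_T N) (fun _ _ => rfl)).mp hw
          obtain ⟨a, haA, ha⟩ := pumpA δ γ' Hfix' h0
          exact ⟨a, haA, (window_iff γ' (Acand_subset_T N haA) (fun _ _ => rfl)).mpr ha⟩
        · intro hw
          have h0 : locFix N γ' c 0 :=
            (window_iff γ' (zero_mem_T N) (fun _ _ => rfl)).mp hw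
          obtain ⟨a, haA, ha⟩ := pumpA γ' δ (fun c => (Hfix' c).symm) h0
          exact ⟨a, haA, (window_iff δ (Acand_subset_T N haA) (fun _ _ => rfl)).mpr ha⟩
    · have hQ : IsEmpty Q := not_nonempty_iff.mp hQne
      have hNne : N.Nonempty := by
        rcases Finset.eq_empty_or_nonempty N with h | h
        · exfalso
          subst h
          exact hQ.false (δ (fun n => absurd n.2 (Finset.notMem_empty _)))
        · exact h
      obtain ⟨n0, hn0⟩ := hNne
      refine ⟨fun p => p ⟨n0, hn0⟩, ?_, ?_⟩
      · intro c c' _; exact (hQ.false (c 0)).elim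
      · intro c; exact (hQ.false (c 0)).elim
  · rintro ⟨γ, hA, hB⟩
    refine ⟨N, γ, ?_⟩
    have hBd : ∀ c : ℤ → Q, locFix N δ c 0 → ∃ a : ℤ, locFix N γ c a := by
      intro c hf
      obtain ⟨a, haA, haw⟩ := (hB c).1 ((window_iff δ (zero_mem_T N) (fun _ _ => rfl)).mpr hf)
      exact ⟨a, (window_iff γ (Acand_subset_T N haA) (fun _ _ => rfl)).mp haw⟩
    have hBg : ∀ c : ℤ → Q, locFix N γ c 0 → ∃ a : ℤ, locFix N δ c a := by
      intro c hf
      obtain ⟨a, haA, haw⟩ := (hB c).2 ((window_iff γ (zero_mem_T N) (fun _ _ => rfl)).mpr hf)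
      exact ⟨a, (window_iff δ (Acand_subset_T N haA) (fun _ _ => rfl)).mp haw⟩
    intro c c'
    by_cases hcc : c = c'
    · subst hcc
      rw [exists_eq_step_self_iff, exists_eq_step_self_iff]
      constructor
      · rintro ⟨a, ha⟩
        have hsa : locFix N δ (fun x => c (a + x)) 0 := by
          rw [locFix_shift, add_zero]
          exact ha
        obtain ⟨b, hb⟩ := hBd _ hsa
        rw [locFix_shift] at hb
        exact ⟨a + b, hb⟩
      · rintro ⟨a, ha⟩
        have hsa : locFix N γ (fun x => c (a + x)) 0 := by
          rw [locFix_shift, add_zero]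
          exact ha
        obtain ⟨b, hb⟩ := hBg _ hsa
        rw [locFix_shift] at hb
        exact ⟨a + b, hb⟩
    · have hex : ∃ d : ℤ, c d ≠ c' d := by
        by_contra hne
        push_neg at hne
        exact hcc (funext hne)
      obtain ⟨d, hd⟩ := hex
      by_cases hsig : ∀ x : ℤ, x ≠ d → c x = c' x
      · rw [exists_eq_step_iff_of_ne (fun h => hd h.symm) (fun x hx => (hsig x hx).symm),
          exists_eq_step_iff_of_ne hd (fun x hx => hsig x hx)]
        have hdiff : diffSetZ (fun x => c (d + x)) (fun x => c' (d + x)) = {0} := by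
          ext x
          simp only [diffSetZ, Set.mem_setOf_eq, Set.mem_singleton_iff]
          constructor
          · intro hne
            by_contra hx0
            exact hne (hsig (d + x) (fun h => hx0 (by omega)))
          · intro hx0
            rw [hx0]
            simpa using hd
        have hiff := hA _ _ hdiff
        rw [window_iff δ (zero_mem_T N)
              (fun x hx => (hsig (d + x) (fun h => hx (by omega))).symm),
            window_iff γ (zero_mem_T N)
              (fun x hx => hsig (d + x) (fun h => hx (by omega)))] at hiff
        have e1 : pat N (fun x => c (d + x)) 0 = pat N c d := by
          funext n; show c (d + (0 + (n : ℤ))) = c (d + (n : ℤ)); rw [zero_add]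
        have e2 : pat N (fun x => c' (d + x)) 0 = pat N c' d := by
          funext n; show c' (d + (0 + (n : ℤ))) = c' (d + (n : ℤ)); rw [zero_add]
        simp only [e1, e2, add_zero] at hiff
        exact hiff
      · push_neg at hsig
        obtain ⟨e, he, hne⟩ := hsig
        exact iff_of_false
          (not_exists_eq_step_of_two (Ne.symm he) (fun h => hd h.symm) (fun h => hne h.symm))
          (not_exists_eq_step_of_two (Ne.symm he) hd hne)
end
end
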